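/- arXiv:1112.2769 — 2 statements merged into one kernel-verified Lean document; each statement's English description precedes it below -/
import Mathlib

section
/- In the free monoid on {a, b}, for each n ≥ 1 let Kₙ = {b^(jn) : j ≥ 1}, let L_∞ be the set of nonempty words ending in the letter a, and let Lₙ be the subsemigroup generated by {a, ba, b²a, ..., b^(n−1)a, bⁿ}. Then Lₙ = L_∞ ⊔ Yₙ where Yₙ = {u : u ∈ Kₙ} ∪ {xu : x ∈ L_∞, u ∈ Kₙ}, and this union is disjoint. -/
/-!
A nonempty word lies in `L n` exactly when its final run of `b`s has length divisible by `n`.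
A word ending in `a` is a product of blocks `b ^ k * a`, and each block is
`(b ^ n) ^ (k / n) * (b ^ (k % n) * a)`, a product of generators; conversely `Linf ∪ Y n` is
closed under multiplication and contains the generators. The last letter separates `Linf` from
`Y n`.
-/

namespace CuntzWords9

/-- The generator `a` (corresponding to `t₁`). -/
def a : FreeMonoid (Fin 2) := FreeMonoid.of 0

/-- The generator `b` (corresponding to `t₂`). -/
def b : FreeMonoid (Fin 2) := FreeMonoid.of 1

/-- `L_∞`: the set of nonempty words ending in the letter `a`. -/
def Linf : Set (FreeMonoid (Fin 2)) :=
  {w | (FreeMonoid.toList w).getLast? = some 0}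

/-- `Kₙ = {b^(jn) : j ≥ 1}`. -/
def K (n : ℕ) : Set (FreeMonoid (Fin 2)) := {w | ∃ j ≥ 1, w = b ^ (j * n)}

/-- `Lₙ`: the subsemigroup generated by `{a, ba, …, b^(n−1)a, bⁿ}`. -/
def L (n : ℕ) : Subsemigroup (FreeMonoid (Fin 2)) :=
  Subsemigroup.closure ({x | ∃ k < n, x = b ^ k * a} ∪ {b ^ n})

/-- `Yₙ = Kₙ ∪ {xu : x ∈ L_∞, u ∈ Kₙ}`. -/
def Y (n : ℕ) : Set (FreeMonoid (Fin 2)) :=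
  K n ∪ {w | ∃ x ∈ Linf, ∃ u ∈ K n, w = x * u}

theorem pow_mul_mem {M A : Type*} [Monoid M] [SetLike A M] [MulMemClass A M] {S : A} {x y : M}
    (hx : x ∈ S) (hy : y ∈ S) (q : ℕ) : x ^ q * y ∈ S := by
  induction q with
  | zero => simpa using hy
  | succ q ih => simpa only [pow_succ', mul_assoc] using mul_mem hx ih

theorem toList_getLast?_eq_some_iff {α : Type*} {w : FreeMonoid α} {i : α} :
    w.toList.getLast? = some i ↔ ∃ x, w = x * FreeMonoid.of i := by
  rw [List.getLast?_eq_some_iff]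
  exact ⟨fun ⟨ys, h⟩ => ⟨.ofList ys, FreeMonoid.toList.injective h⟩,
    fun ⟨x, h⟩ => ⟨x.toList, congrArg FreeMonoid.toList h⟩⟩

theorem mem_Linf_iff {w : FreeMonoid (Fin 2)} : w ∈ Linf ↔ ∃ x, w = x * a :=
  toList_getLast?_eq_some_iff

theorem mul_mem_Linf (x : FreeMonoid (Fin 2)) {y : FreeMonoid (Fin 2)} (hy : y ∈ Linf) :
    x * y ∈ Linf := by
  obtain ⟨z, rfl⟩ := mem_Linf_iff.1 hy
  exact mem_Linf_iff.2 ⟨x * z, (mul_assoc x z a).symm⟩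

theorem mul_mem_K {n : ℕ} {u v : FreeMonoid (Fin 2)} (hu : u ∈ K n) (hv : v ∈ K n) :
    u * v ∈ K n := by
  obtain ⟨i, hi, rfl⟩ := hu
  obtain ⟨j, hj, rfl⟩ := hv
  exact ⟨i + j, by omega, by rw [add_mul, pow_add]⟩

theorem exists_eq_mul_b_of_mem_K {n : ℕ} (hn : 1 ≤ n) {u : FreeMonoid (Fin 2)} (hu : u ∈ K n) :
    ∃ v, u = v * b := by
  obtain ⟨j, hj, rfl⟩ := hu
  refine ⟨b ^ (j * n - 1), ?_⟩
  rw [← pow_succ, Nat.sub_add_cancel (Nat.mul_pos hj hn)]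

theorem exists_eq_mul_b_of_mem_Y {n : ℕ} (hn : 1 ≤ n) {w : FreeMonoid (Fin 2)} (hw : w ∈ Y n) :
    ∃ v, w = v * b := by
  rcases hw with hw | ⟨x, -, u, hu, rfl⟩
  · exact exists_eq_mul_b_of_mem_K hn hw
  · obtain ⟨v, rfl⟩ := exists_eq_mul_b_of_mem_K hn hu
    exact ⟨x * v, (mul_assoc x v b).symm⟩

theorem disjoint_Linf_Y {n : ℕ} (hn : 1 ≤ n) : Disjoint Linf (Y n) := by
  refine Set.disjoint_left.2 fun w hw hwY => ?_
  obtain ⟨v, rfl⟩ := exists_eq_mul_b_of_mem_Y hn hwY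
  simp [Linf, b] at hw

def LinfUnionY (n : ℕ) : Subsemigroup (FreeMonoid (Fin 2)) where
  carrier := Linf ∪ Y n
  mul_mem' {x y} hx hy := by
    rcases hy with hy | hy | ⟨z, hz, u, hu, rfl⟩
    · exact Or.inl (mul_mem_Linf x hy)
    · rcases hx with hx | hx | ⟨z, hz, u, hu, rfl⟩
      · exact Or.inr (Or.inr ⟨x, hx, y, hy, rfl⟩)
      · exact Or.inr (Or.inl (mul_mem_K hx hy))
      · exact Or.inr (Or.inr ⟨z, hz, u * y, mul_mem_K hu hy, mul_assoc z u y⟩)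
    · exact Or.inr (Or.inr ⟨x * z, mul_mem_Linf x hz, u, hu, (mul_assoc x z u).symm⟩)

theorem L_le_LinfUnionY (n : ℕ) : L n ≤ LinfUnionY n := by
  rw [L, Subsemigroup.closure_le]
  rintro w (⟨k, -, rfl⟩ | rfl)
  · exact Or.inl (mem_Linf_iff.2 ⟨b ^ k, rfl⟩)
  · exact Or.inr (Or.inl ⟨1, le_rfl, by rw [one_mul]⟩)

theorem b_pow_n_mem_L (n : ℕ) : b ^ n ∈ L n :=
  Subsemigroup.subset_closure (Or.inr rfl)

theorem K_subset_L (n : ℕ) : K n ⊆ L n := by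
  rintro _ ⟨j, hj, rfl⟩
  rw [← Nat.sub_add_cancel hj, add_one_mul, pow_add, pow_mul']
  exact pow_mul_mem (b_pow_n_mem_L n) (b_pow_n_mem_L n) _

theorem b_pow_mul_a_mem_L {n : ℕ} (hn : 1 ≤ n) (k : ℕ) : b ^ k * a ∈ L n := by
  have hr : b ^ (k % n) * a ∈ L n :=
    Subsemigroup.subset_closure (Or.inl ⟨k % n, Nat.mod_lt k hn, rfl⟩)
  rw [← Nat.div_add_mod k n, pow_add, pow_mul, mul_assoc]
  exact pow_mul_mem (b_pow_n_mem_L n) hr _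

theorem mul_a_mem_of_forall_b_pow_mul_a_mem {A : Type*} [SetLike A (FreeMonoid (Fin 2))]
    [MulMemClass A (FreeMonoid (Fin 2))] {S : A} (h : ∀ k, b ^ k * a ∈ S)
    (x : FreeMonoid (Fin 2)) : x * a ∈ S := by
  -- `k` counts the `b`s read since the last `a`, which closes the block `b ^ k * a`.
  suffices ∀ k, b ^ k * x * a ∈ S by simpa using this 0
  induction x using FreeMonoid.inductionOn' with
  | one => simpa using h
  | of_mul i x ih =>
    intro k
    fin_cases i
    · change b ^ k * (a * x) * a ∈ S
      simpa only [mul_assoc] using mul_mem (h k) (by simpa using ih 0)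
    · change b ^ k * (b * x) * a ∈ S
      simpa only [pow_succ, mul_assoc] using ih (k + 1)

theorem Linf_subset_L {n : ℕ} (hn : 1 ≤ n) : Linf ⊆ L n := by
  intro w hw
  obtain ⟨x, rfl⟩ := mem_Linf_iff.1 hw
  exact mul_a_mem_of_forall_b_pow_mul_a_mem (b_pow_mul_a_mem_L hn) x

/-- `Lₙ = L_∞ ⊔ Yₙ`, a disjoint union. -/
theorem L_eq_Linf_disjUnion_Y (n : ℕ) (hn : 1 ≤ n) :
    (L n : Set (FreeMonoid (Fin 2))) = Linf ∪ Y n ∧ Disjoint Linf (Y n) := by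
  refine ⟨subset_antisymm (L_le_LinfUnionY n) ?_, disjoint_Linf_Y hn⟩
  rintro w (hw | hw | ⟨x, hx, u, hu, rfl⟩)
  · exact Linf_subset_L hn hw
  · exact K_subset_L n hw
  · exact mul_mem (Linf_subset_L hn hx) (K_subset_L n hu)

end CuntzWords9
end

section
/- Define, for positive integers n ∣ m with n ≠ m, a monoid homomorphism g_{n,m} from the free monoid on {σ₁,...,σ_{m+1}} to the free monoid on {τ₁,...,τ_{n+1}} by g_{n,m}(σ_{nl+i}) = τ_{n+1}^l τ_i (for 0 ≤ l ≤ m/n − 1, 1 ≤ i ≤ n) and g_{n,m}(σ_{m+1}) = τ_{n+1}^{m/n}, and let g_{n,n} = id. Then for n ∣ m ∣ k one has g_{n,m} ∘ g_{m,k} = g_{n,k} on generators. -/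
/-!
Writing `j = m (j / m) + j % m`, the letter `σ_{j+1}` goes under `g_{m,k}` to a power of the
last letter followed by the letter indexed by `j % m`, and `g_{n,m}` then produces
`τ_{n+1}^{(m/n)(j/m) + (j % m)/n}` followed by the letter indexed by `j % m % n`. Since `n ∣ m`,
the exponent is `j / n` and the index is `j % n`; the last generator is the case `j = k`.
-/

namespace CuntzEmbed16

/-- Image of the generator `σ_{j+1}` (0-indexed `j : Fin (m+1)`) of the free
monoid on `m+1` letters under `g_{n,m}`: the last generator `σ_{m+1}` goes to
`τ_{n+1}^{m/n}`, and `σ_{nl+i}` (`0 ≤ l ≤ m/n − 1`, `1 ≤ i ≤ n`) goes to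
`τ_{n+1}^l τ_i`. -/
def gGen (n m : ℕ) (hn : 0 < n) (_h : n ∣ m) (j : Fin (m + 1)) :
    FreeMonoid (Fin (n + 1)) :=
  if j.val = m then (FreeMonoid.of ⟨n, Nat.lt_succ_self n⟩) ^ (m / n)
  else (FreeMonoid.of ⟨n, Nat.lt_succ_self n⟩) ^ (j.val / n) *
    FreeMonoid.of ⟨j.val % n, (Nat.mod_lt _ hn).trans (Nat.lt_succ_self n)⟩

/-- The monoid homomorphism `g_{n,m}` from the free monoid on `m+1`
generators to the free monoid on `n+1` generators (for `n ∣ m`);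
for `n = m` it is the identity on generators. -/
def g (n m : ℕ) (hn : 0 < n) (h : n ∣ m) :
    FreeMonoid (Fin (m + 1)) →* FreeMonoid (Fin (n + 1)) :=
  FreeMonoid.lift (gGen n m hn h)

theorem _root_.Nat.div_mul_div_add_mod_div {n m : ℕ} (hn : 0 < n) (h : n ∣ m) (j : ℕ) :
    m / n * (j / m) + j % m / n = j / n := by
  have hj : j = j % m + n * (m / n * (j / m)) := by
    rw [← mul_assoc, Nat.mul_div_cancel' h, add_comm, Nat.div_add_mod]
  conv_rhs => rw [hj]
  rw [Nat.add_mul_div_left _ _ hn, add_comm]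

section

variable {n m : ℕ} (hn : 0 < n) (h : n ∣ m)

theorem g_of (j : Fin (m + 1)) : g n m hn h (FreeMonoid.of j) = gGen n m hn h j :=
  FreeMonoid.lift_eval_of _ _

theorem g_of_last : g n m hn h (FreeMonoid.of (Fin.last m)) =
    FreeMonoid.of (Fin.last n) ^ (m / n) := by
  rw [g_of, gGen, if_pos (Fin.val_last m)]
  rfl

theorem g_of_val_lt (j : Fin (m + 1)) (hj : j.val < m) :
    g n m hn h (FreeMonoid.of j) = FreeMonoid.of (Fin.last n) ^ (j.val / n) *
      FreeMonoid.of ⟨j.val % n, (Nat.mod_lt _ hn).trans (Nat.lt_succ_self n)⟩ := by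
  rw [g_of, gGen, if_neg hj.ne]
  rfl

theorem g_of_last_pow (p : ℕ) : g n m hn h (FreeMonoid.of (Fin.last m) ^ p) =
    FreeMonoid.of (Fin.last n) ^ (m / n * p) := by
  rw [map_pow, g_of_last, pow_mul]

end

/-- Compatibility of the word-level Cuntz embeddings: for `n ∣ m ∣ k`,
`g_{n,m} ∘ g_{m,k} = g_{n,k}` on every generator. -/
theorem g_comp (n m k : ℕ) (hn : 0 < n) (hm : 0 < m)
    (h1 : n ∣ m) (h2 : m ∣ k) (j : Fin (k + 1)) :
    g n m hn h1 (g m k hm h2 (FreeMonoid.of j)) =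
      g n k hn (h1.trans h2) (FreeMonoid.of j) := by
  have hdiv := Nat.div_mul_div_add_mod_div hn h1
  rcases (Fin.le_last j).eq_or_lt with rfl | hj
  · have hk := hdiv k
    rw [Nat.mod_eq_zero_of_dvd h2, Nat.zero_div, add_zero] at hk
    rw [g_of_last, g_of_last_pow, g_of_last, hk]
  · have hr : j.val % m < m := Nat.mod_lt _ hm
    rw [g_of_val_lt hm h2 j hj, g_of_val_lt hn _ j hj, map_mul, g_of_last_pow,
      g_of_val_lt hn h1 _ hr, ← mul_assoc, ← pow_add, hdiv]
    simp only [Nat.mod_mod_of_dvd _ h1]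

end CuntzEmbed16
end
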